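/- arXiv:math/0310232 — 3 statements merged into one kernel-verified Lean document; each statement's English description precedes it below -/
import Mathlib

section
/- Fix d ≥ 1, n ≥ 1, r > 0, γ > 0 and p ∈ [0,1], and suppose P{M_n^{(d)} > γ} ≤ p. Let G be a random geometric graph G(X_n; r) and G′ a random geometric graph G(X_n; r + 2γ), drawn independently of each other. Then P{G is isomorphic to a subgraph of G′} ≥ 1 − p. -/
open MeasureTheory Real

noncomputable section

/-- The uniform probability measure on the unit cube `[0,1]^d`. -/
def cubeMeasure (d : ℕ) : Measure (Fin d → ℝ) :=
  Measure.pi fun _ => volume.restrict (Set.Icc (0 : ℝ) 1)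

/-- The joint law of `n` i.i.d. points, each uniform on `[0,1]^d`. -/
def sampleMeasure (d n : ℕ) : Measure (Fin n → Fin d → ℝ) :=
  Measure.pi fun _ => cubeMeasure d

/-- Euclidean distance on `Fin d → ℝ`. -/
def eDist {d : ℕ} (x y : Fin d → ℝ) : ℝ :=
  Real.sqrt (∑ k, (x k - y k) ^ 2)

lemma eDist_comm {d : ℕ} (x y : Fin d → ℝ) : eDist x y = eDist y x := by
  unfold eDist
  congr 1
  exact Finset.sum_congr rfl fun k _ => by ring

/-- The geometric graph on the points `x 0, …, x (n-1)` with radius `r`: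
distinct `i`, `j` are adjacent iff the Euclidean distance of `x i` and `x j` is at most `r`. -/
def geomGraph {d n : ℕ} (x : Fin n → Fin d → ℝ) (r : ℝ) : SimpleGraph (Fin n) where
  Adj i j := i ≠ j ∧ eDist (x i) (x j) ≤ r
  symm := ⟨fun i j h => ⟨h.1.symm, by rw [eDist_comm]; exact h.2⟩⟩
  loopless := ⟨fun i h => h.1 rfl⟩

/-- A graph property (on labelled vertex sets `Fin m`) is closed under isomorphism. -/
def IsoClosed (A : ∀ m, SimpleGraph (Fin m) → Prop) : Prop :=
  ∀ m, ∀ G G' : SimpleGraph (Fin m), Nonempty (G ≃g G') → (A m G ↔ A m G')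

/-- A graph property is increasing: preserved by adding edges. -/
def IncreasingProp (A : ∀ m, SimpleGraph (Fin m) → Prop) : Prop :=
  ∀ m, ∀ G G' : SimpleGraph (Fin m), G ≤ G' → A m G → A m G'

/-- The probability that a random geometric graph on `n` uniform points in `[0,1]^d`
with radius `r` satisfies the property `A`. -/
def geomProb (d n : ℕ) (A : ∀ m, SimpleGraph (Fin m) → Prop) (r : ℝ) : ENNReal :=
  sampleMeasure d n {x | A n (geomGraph x r)}

/-- Threshold radius `r_A(n, ε)`. -/
def thresholdRadius (d n : ℕ) (A : ∀ m, SimpleGraph (Fin m) → Prop) (ε : ℝ) : ℝ :=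
  sInf {r : ℝ | 0 < r ∧ ENNReal.ofReal ε ≤ geomProb d n A r}

/-- Threshold width `δ_A(n, ε) = r_A(n, 1-ε) - r_A(n, ε)`. -/
def thresholdWidth (d n : ℕ) (A : ∀ m, SimpleGraph (Fin m) → Prop) (ε : ℝ) : ℝ :=
  thresholdRadius d n A (1 - ε) - thresholdRadius d n A ε

/-- The bottleneck matching weight between the point sets `x` and `y`. -/
def bottleneck {d n : ℕ} (x y : Fin n → Fin d → ℝ) : ℝ :=
  ⨅ φ : Equiv.Perm (Fin n), ⨆ i, eDist (x i) (y (φ i))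

/-- The joint law of two independent samples of `n` uniform points in `[0,1]^d`. -/
def pairMeasure (d n : ℕ) : Measure ((Fin n → Fin d → ℝ) × (Fin n → Fin d → ℝ)) :=
  (sampleMeasure d n).prod (sampleMeasure d n)

/-- `G` is isomorphic to a subgraph of `G'`. -/
def IsSubgraphIso {n m : ℕ} (G : SimpleGraph (Fin n)) (G' : SimpleGraph (Fin m)) : Prop :=
  ∃ f : Fin n ↪ Fin m, ∀ i j, G.Adj i j → G'.Adj (f i) (f j)

/-- The property: every vertex has degree at least a quarter of the number of vertices. -/
def minDegProp : ∀ m, SimpleGraph (Fin m) → Prop :=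
  fun m G => ∀ v, (m : ℝ) / 4 ≤ ((G.neighborSet v).ncard : ℝ)

/-- The property of being a complete graph. -/
def completeProp : ∀ m, SimpleGraph (Fin m) → Prop :=
  fun m G => ∀ i j : Fin m, i ≠ j → G.Adj i j

/-! If the bottleneck matching weight is at most `γ`, an optimal matching `φ` moves every point
by at most `γ`, so by the triangle inequality it maps each edge of `G(x; r)` to an edge of
`G(y; r + 2γ)`. The embedding event therefore contains the complement of `{M > γ}`. -/

lemma eDist_eq_dist {d : ℕ} (x y : Fin d → ℝ) :
    eDist x y = dist (WithLp.toLp 2 x) (WithLp.toLp 2 y) := by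
  simp [EuclideanSpace.dist_eq, eDist, Real.dist_eq, sq_abs]

lemma eDist_triangle {d : ℕ} (x y z : Fin d → ℝ) : eDist x z ≤ eDist x y + eDist y z := by
  simpa only [eDist_eq_dist] using dist_triangle _ _ _

instance : IsProbabilityMeasure (volume.restrict (Set.Icc (0 : ℝ) 1)) :=
  ⟨by simp⟩

instance (d n : ℕ) : IsProbabilityMeasure (pairMeasure d n) := by
  unfold pairMeasure sampleMeasure cubeMeasure
  infer_instance

lemma exists_perm_forall_eDist_le_of_bottleneck_le {d n : ℕ} {x y : Fin n → Fin d → ℝ} {γ : ℝ}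
    (h : bottleneck x y ≤ γ) : ∃ φ : Equiv.Perm (Fin n), ∀ i, eDist (x i) (y (φ i)) ≤ γ := by
  obtain ⟨φ, hφ⟩ := Finite.exists_min fun φ : Equiv.Perm (Fin n) => ⨆ i, eDist (x i) (y (φ i))
  have hφ_attains : bottleneck x y = ⨆ i, eDist (x i) (y (φ i)) :=
    le_antisymm (ciInf_le (Finite.bddBelow_range _) φ) (le_ciInf hφ)
  exact ⟨φ, fun i => (le_ciSup (Finite.bddAbove_range _) i).trans (hφ_attains ▸ h)⟩

lemma isSubgraphIso_geomGraph_of_bottleneck_le {d n : ℕ} {x y : Fin n → Fin d → ℝ} {r γ : ℝ}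
    (h : bottleneck x y ≤ γ) : IsSubgraphIso (geomGraph x r) (geomGraph y (r + 2 * γ)) := by
  obtain ⟨φ, hφ⟩ := exists_perm_forall_eDist_le_of_bottleneck_le h
  refine ⟨φ.toEmbedding, fun i j ⟨hij, hxij⟩ => ⟨φ.injective.ne hij, ?_⟩⟩
  calc eDist (y (φ i)) (y (φ j))
      ≤ eDist (y (φ i)) (x i) + (eDist (x i) (x j) + eDist (x j) (y (φ j))) :=
        (eDist_triangle _ _ _).trans (add_le_add_right (eDist_triangle _ _ _) _)
    _ ≤ γ + (r + γ) := by
        rw [eDist_comm (y (φ i))]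
        gcongr
        exacts [hφ i, hφ j]
    _ = r + 2 * γ := by ring

lemma ofReal_one_sub_le_measure_of_compl_subset {α : Type*} [MeasurableSpace α]
    {μ : Measure α} [IsProbabilityMeasure μ] {s t : Set α} {p : ℝ} (hp : 0 ≤ p)
    (hs : μ s ≤ ENNReal.ofReal p) (hst : sᶜ ⊆ t) : ENNReal.ofReal (1 - p) ≤ μ t := by
  rw [ENNReal.ofReal_sub _ hp, ENNReal.ofReal_one, tsub_le_iff_right, add_comm]
  calc 1 = μ Set.univ := measure_univ.symm
    _ ≤ μ s + μ sᶜ := measure_univ_le_add_compl s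
    _ ≤ ENNReal.ofReal p + μ t := add_le_add hs (measure_mono hst)

theorem stmt5_general (d n : ℕ) (r γ p : ℝ) (hp0 : 0 ≤ p)
    (hM : pairMeasure d n {q | γ < bottleneck q.1 q.2} ≤ ENNReal.ofReal p) :
    ENNReal.ofReal (1 - p) ≤
      pairMeasure d n
        {q | IsSubgraphIso (geomGraph q.1 r) (geomGraph q.2 (r + 2 * γ))} :=
  ofReal_one_sub_le_measure_of_compl_subset hp0 hM fun _ hq =>
    isSubgraphIso_geomGraph_of_bottleneck_le (not_lt.mp hq)

/-- if the bottleneck matching weight exceeds `γ` with probability at most `p`,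
then an independent `G(X_n; r)` is isomorphic to a subgraph of `G(X_n; r + 2γ)` with
probability at least `1 - p`. -/
theorem stmt5 (d n : ℕ) (hd : 1 ≤ d) (hn : 1 ≤ n) (r γ p : ℝ)
    (hr : 0 < r) (hγ : 0 < γ) (hp0 : 0 ≤ p) (hp1 : p ≤ 1)
    (hM : pairMeasure d n {q | γ < bottleneck q.1 q.2} ≤ ENNReal.ofReal p) :
    ENNReal.ofReal (1 - p) ≤
      pairMeasure d n
        {q | IsSubgraphIso (geomGraph q.1 r) (geomGraph q.2 (r + 2 * γ))} :=
  stmt5_general d n r γ p hp0 hM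

end
end

section
/- Let d = 1 and let Π be the increasing property 'every vertex of G has degree at least |V(G)|/4'. There exist a constant c > 0 and n₀ such that for all n ≥ n₀ divisible by 4, r_Π(n, 1/2) ≤ 1/4 + c/√n. -/
open MeasureTheory Real

noncomputable section

/-! Cover `[0, 1]` by four intervals of length `r = 1/4 + 2/√n`. The number of sample points in
such an interval has mean `n/4 + 2√n` and variance at most `n/4`, so by Chebyshev it is at most
`n/4` with probability at most `1/16`. Outside these four events, which have total probability at
most `1/4`, every point lies in an interval of length `r` holding more than `n/4` points, all of
them its neighbours, so its degree is at least `n/4`. -/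


open ProbabilityTheory Set

section HitCount

variable {ι γ : Type*} [Fintype ι]

def hitCount (A : Set γ) : (ι → γ) → ℝ := ∑ j, fun x => A.indicator 1 (x j)

lemma hitCount_eq_card (A : Set γ) [DecidablePred (· ∈ A)] (x : ι → γ) :
    hitCount A x = ((Finset.univ.filter fun j => x j ∈ A).card : ℝ) := by
  simp [hitCount, Finset.sum_apply, Set.indicator_apply]

variable [MeasurableSpace γ] (ν : Measure γ) [IsProbabilityMeasure ν] {A : Set γ}

lemma measurable_hitCount (hA : MeasurableSet A) : Measurable (hitCount A : (ι → γ) → ℝ) := by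
  rw [hitCount, Finset.sum_fn]
  exact Finset.measurable_fun_sum _ fun j _ =>
    (measurable_one.indicator hA).comp (measurable_pi_apply j)

lemma memLp_indicator_one_eval (hA : MeasurableSet A) (p : ENNReal) (j : ι) :
    MemLp (fun x : ι → γ => A.indicator (1 : γ → ℝ) (x j)) p (Measure.pi fun _ => ν) :=
  ((memLp_const (1 : ℝ)).indicator hA).comp_measurePreserving (measurePreserving_eval _ j)

lemma integral_hitCount (hA : MeasurableSet A) :
    ∫ x, hitCount A x ∂Measure.pi (fun _ : ι => ν) = Fintype.card ι * ν.real A := by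
  simp only [hitCount, Finset.sum_apply]
  rw [integral_finsetSum _ fun j _ => (memLp_indicator_one_eval ν hA 1 j).integrable le_rfl]
  simp [integral_comp_eval (μ := fun _ : ι => ν)
    (stronglyMeasurable_one.indicator hA).aestronglyMeasurable, integral_indicator_one hA]

lemma variance_hitCount_le (hA : MeasurableSet A) :
    Var[hitCount A; Measure.pi fun _ : ι => ν] ≤ Fintype.card ι / 4 := by
  have hbdd : ∀ y, A.indicator (1 : γ → ℝ) y ∈ Icc 0 1 := fun y => by
    by_cases hy : y ∈ A <;> simp [hy]
  have hmem : MemLp (A.indicator (1 : γ → ℝ)) 2 ν := (memLp_const 1).indicator hA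
  rw [hitCount, variance_sum_pi fun _ => hmem]
  calc ∑ _j : ι, Var[A.indicator 1; ν] ≤ ∑ _j : ι, ((1 - 0) / 2 : ℝ) ^ 2 :=
        Finset.sum_le_sum fun _ _ =>
          variance_le_sq_of_bounded (ae_of_all _ hbdd) (measurable_one.indicator hA).aemeasurable
    _ = Fintype.card ι / 4 := by rw [Finset.sum_const, Finset.card_univ, nsmul_eq_mul]; ring

lemma measure_hitCount_le_sub_le (hA : MeasurableSet A) {t : ℝ} (ht : 0 < t) :
    Measure.pi (fun _ : ι => ν) {x | hitCount A x ≤ Fintype.card ι * ν.real A - t}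
      ≤ ENNReal.ofReal (Fintype.card ι / (4 * t ^ 2)) := by
  set μ := Measure.pi fun _ : ι => ν
  calc μ {x | hitCount A x ≤ Fintype.card ι * ν.real A - t}
      ≤ μ {x | t ≤ |hitCount A x - μ[hitCount A]|} := by
        refine measure_mono fun x hx => ?_
        rw [mem_ofPred, integral_hitCount ν hA, abs_sub_comm, le_abs]
        exact Or.inl (by linarith [mem_ofPred.1 hx])
    _ ≤ ENNReal.ofReal (Var[hitCount A; μ] / t ^ 2) :=
        meas_ge_le_variance_div_sq
          (memLp_finsetSum' _ fun j _ => memLp_indicator_one_eval ν hA 2 j) ht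
    _ ≤ ENNReal.ofReal (Fintype.card ι / (4 * t ^ 2)) := by
        rw [← div_div]
        gcongr
        exact variance_hitCount_le ν hA

end HitCount

instance : IsProbabilityMeasure (volume.restrict (Icc (0 : ℝ) 1)) :=
  ⟨by simp⟩

instance (d : ℕ) : IsProbabilityMeasure (cubeMeasure d) := by
  unfold cubeMeasure; infer_instance

instance (d n : ℕ) : IsProbabilityMeasure (sampleMeasure d n) := by
  unfold sampleMeasure; infer_instance

lemma ae_sampleMeasure_mem_Icc (d n : ℕ) :
    ∀ᵐ x ∂sampleMeasure d n, ∀ (j : Fin n) (k : Fin d), x j k ∈ Icc (0 : ℝ) 1 := by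
  rw [sampleMeasure]
  refine ae_all_iff.2 fun j => (Measure.tendsto_eval_ae_ae (i := j)).eventually
    (p := fun y : Fin d → ℝ => ∀ k, y k ∈ Icc 0 1) (ae_all_iff.2 fun k => ?_)
  exact (Measure.tendsto_eval_ae_ae (i := k)).eventually (ae_restrict_mem measurableSet_Icc)

lemma cubeMeasure_one_real {a b : ℝ} (hab : a ≤ b) (hsub : Icc a b ⊆ Icc 0 1) :
    (cubeMeasure 1).real {y | y 0 ∈ Icc a b} = b - a := by
  have hpre : {y : Fin 1 → ℝ | y 0 ∈ Icc a b} = Function.eval 0 ⁻¹' Icc a b := rfl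
  rw [measureReal_def, cubeMeasure, hpre,
    (measurePreserving_eval _ 0).measure_preimage measurableSet_Icc.nullMeasurableSet,
    Measure.restrict_apply measurableSet_Icc, inter_eq_self_of_subset_left hsub,
    Real.volume_Icc, ENNReal.toReal_ofReal (sub_nonneg.2 hab)]

lemma eDist_fin_one (y z : Fin 1 → ℝ) : eDist y z = |y 0 - z 0| := by
  rw [eDist, Fin.sum_univ_one, Real.sqrt_sq_eq_abs]

lemma le_ncard_neighborSet_geomGraph {n : ℕ} {x : Fin n → Fin 1 → ℝ} {a b r : ℝ}
    (hr : b - a ≤ r) {v : Fin n} (hv : x v 0 ∈ Icc a b) {k : ℕ}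
    (hk : (k : ℝ) < hitCount {y : Fin 1 → ℝ | y 0 ∈ Icc a b} x) :
    k ≤ ((geomGraph x r).neighborSet v).ncard := by
  classical
  set S := Finset.univ.filter fun j => x j ∈ {y : Fin 1 → ℝ | y 0 ∈ Icc a b}
  rw [hitCount_eq_card] at hk
  have hvS : v ∈ S := Finset.mem_filter.2 ⟨Finset.mem_univ v, hv⟩
  have hsub : ↑(S.erase v) ⊆ (geomGraph x r).neighborSet v := by
    intro j hj
    obtain ⟨hjv, hjS⟩ := Finset.mem_erase.1 hj
    have hj : x j 0 ∈ Icc a b := (Finset.mem_filter.1 hjS).2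
    refine ⟨Ne.symm hjv, ?_⟩
    rw [eDist_fin_one, abs_le]
    constructor <;> linarith [hv.1, hv.2, hj.1, hj.2]
  calc k ≤ (S.erase v).card := by
        rw [Finset.card_erase_of_mem hvS]; exact Nat.le_sub_one_of_lt (by exact_mod_cast hk)
    _ = (↑(S.erase v) : Set (Fin n)).ncard := (ncard_coe_finset _).symm
    _ ≤ _ := ncard_le_ncard hsub

def quarterStart (s : ℝ) : Fin 4 → ℝ := ![0, 1/4 - s, 1/2 - s, 3/4 - s]

def quarterBlock (s : ℝ) (k : Fin 4) : Set (Fin 1 → ℝ) :=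
  {y | y 0 ∈ Icc (quarterStart s k) (quarterStart s k + (1/4 + s))}

lemma exists_mem_quarterBlock {s : ℝ} (hs : 0 ≤ s) {y : Fin 1 → ℝ} (hy : y 0 ∈ Icc 0 1) :
    ∃ k, y ∈ quarterBlock s k := by
  obtain ⟨h0, h1⟩ := hy
  show ∃ k : Fin 4, quarterStart s k ≤ y 0 ∧ y 0 ≤ quarterStart s k + (1/4 + s)
  simp only [quarterStart, Fin.exists_fin_succ, Matrix.cons_val_zero, Matrix.cons_val_succ,
    Fin.exists_fin_zero]
  by_contra! h
  obtain ⟨h₀, h₁, h₂, h₃, -⟩ := h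
  -- each block reaches past the start of the next one, and the last one reaches `1`
  linarith [h₃ (by linarith [h₂ (by linarith [h₁ (by linarith [h₀ h0])])])]

lemma Icc_quarterStart_subset {s : ℝ} (hs : s ≤ 1/4) (k : Fin 4) :
    Icc (quarterStart s k) (quarterStart s k + (1/4 + s)) ⊆ Icc 0 1 := by
  apply Icc_subset_Icc <;> fin_cases k <;>
    simp only [quarterStart, Fin.zero_eta, Fin.mk_one, Fin.reduceFinMk, Matrix.cons_val_zero,
      Matrix.cons_val_one, Matrix.cons_val] <;> linarith

lemma minDegProp_geomGraph_of_lt_hitCount {m : ℕ} {s : ℝ} (hs : 0 ≤ s)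
    {x : Fin (4 * m) → Fin 1 → ℝ} (hx : ∀ j, x j 0 ∈ Icc 0 1)
    (hcount : ∀ k, (m : ℝ) < hitCount (quarterBlock s k) x) :
    minDegProp (4 * m) (geomGraph x (1/4 + s)) := by
  intro v
  obtain ⟨k, hk⟩ := exists_mem_quarterBlock hs (hx v)
  have hdeg := le_ncard_neighborSet_geomGraph (add_sub_cancel_left _ _).le hk (hcount k)
  push_cast
  linarith [(Nat.cast_le (α := ℝ)).2 hdeg]

lemma measurableSet_quarterBlock (s : ℝ) (k : Fin 4) : MeasurableSet (quarterBlock s k) :=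
  measurableSet_Icc.preimage (measurable_pi_apply 0)

lemma measureReal_hitCount_quarterBlock_le {n : ℕ} (hn : 64 ≤ n) (k : Fin 4) :
    (sampleMeasure 1 n).real {x | hitCount (quarterBlock (2 / √n) k) x ≤ n / 4} ≤ 1 / 16 := by
  have hn₀ : (0 : ℝ) < n := by positivity
  have hsqrt : (8 : ℝ) ≤ √n := Real.le_sqrt_of_sq_le (by norm_cast)
  have hs₀ : 0 ≤ 2 / √n := by positivity
  have hs : 2 / √n ≤ 1 / 4 := by rw [div_le_iff₀ (by positivity)]; linarith
  have hblock : (cubeMeasure 1).real (quarterBlock (2 / √n) k) = 1 / 4 + 2 / √n := by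
    rw [quarterBlock, cubeMeasure_one_real (by linarith) (Icc_quarterStart_subset hs k)]
    ring
  have hmean : (Fintype.card (Fin n) : ℝ) * (cubeMeasure 1).real (quarterBlock (2 / √n) k)
      - 2 * √n = n / 4 := by
    rw [hblock, Fintype.card_fin]
    field_simp
    rw [Real.sq_sqrt hn₀.le]
    ring
  have hvar : (Fintype.card (Fin n) : ℝ) / (4 * (2 * √n) ^ 2) = 1 / 16 := by
    rw [Fintype.card_fin, mul_pow, Real.sq_sqrt hn₀.le]
    field_simp
    ring
  have hcheb := measure_hitCount_le_sub_le (ι := Fin n) (cubeMeasure 1)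
    (measurableSet_quarterBlock (2 / √n) k) (show 0 < 2 * √n by positivity)
  rw [hmean, hvar] at hcheb
  exact ENNReal.toReal_le_of_le_ofReal (by norm_num) hcheb

lemma half_le_geomProb_minDegProp {m : ℕ} (hm : 16 ≤ m) :
    ENNReal.ofReal (1 / 2) ≤ geomProb 1 (4 * m) minDegProp (1 / 4 + 2 / √(4 * m : ℕ)) := by
  set n := 4 * m
  set s := 2 / √(n : ℝ)
  set μ := sampleMeasure 1 n
  set bad : Fin 4 → Set (Fin n → Fin 1 → ℝ) :=
    fun k => {x | hitCount (quarterBlock s k) x ≤ n / 4}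
  have hbad : MeasurableSet (⋃ k, bad k) := MeasurableSet.iUnion fun k =>
    measurableSet_le (measurable_hitCount (measurableSet_quarterBlock s k)) measurable_const
  have hgood : (⋃ k, bad k)ᶜ ≤ᵐ[μ] {x | minDegProp n (geomGraph x (1 / 4 + s))} := by
    filter_upwards [ae_sampleMeasure_mem_Icc 1 n] with x hx hgood
    change x ∉ ⋃ k, bad k at hgood
    simp only [bad, mem_iUnion, mem_ofPred, not_exists, not_le] at hgood
    refine minDegProp_geomGraph_of_lt_hitCount (by positivity) (fun j => hx j 0) fun k => ?_
    simpa [n] using hgood k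
  have hunion : μ.real (⋃ k, bad k) ≤ 1 / 4 :=
    calc μ.real (⋃ k, bad k) ≤ ∑ k, μ.real (bad k) := measureReal_iUnion_fintype_le _
      _ ≤ ∑ _k : Fin 4, (1 / 16 : ℝ) := Finset.sum_le_sum fun k _ =>
          measureReal_hitCount_quarterBlock_le (by omega) k
      _ = 1 / 4 := by norm_num
  calc ENNReal.ofReal (1 / 2) ≤ ENNReal.ofReal (μ.real (⋃ k, bad k)ᶜ) := by
        rw [measureReal_compl hbad, probReal_univ]
        exact ENNReal.ofReal_le_ofReal (by linarith)
    _ = μ (⋃ k, bad k)ᶜ := ofReal_measureReal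
    _ ≤ geomProb 1 n minDegProp (1 / 4 + s) := measure_mono_ae hgood

lemma thresholdRadius_le {d n : ℕ} {A : ∀ m, SimpleGraph (Fin m) → Prop} {ε r : ℝ} (hr : 0 < r)
    (h : ENNReal.ofReal ε ≤ geomProb d n A r) : thresholdRadius d n A ε ≤ r :=
  csInf_le ⟨0, fun _ hρ => hρ.1.le⟩ ⟨hr, h⟩

/-- in dimension `d = 1`, for the property "minimum degree at least `|V|/4`",
for large `n` divisible by 4, `r_Π(n, 1/2) ≤ 1/4 + c/√n`. -/
theorem stmt8 :
    ∃ c : ℝ, 0 < c ∧ ∃ n₀ : ℕ, ∀ n : ℕ, n₀ ≤ n → 4 ∣ n →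
      thresholdRadius 1 n minDegProp (1 / 2) ≤ 1 / 4 + c / Real.sqrt n := by
  refine ⟨2, two_pos, 64, ?_⟩
  rintro _ hn ⟨m, rfl⟩
  exact thresholdRadius_le (by positivity) (half_le_geomProb_minDegProp (by omega))

end
end

section
/- Let d ≥ 1, n ≥ 2, and 0 < Δ < 1/2, and let G ∼ G(X_n; u) be a random geometric graph in [0,1]^d with radius u = √d·(1 − 2Δ). Then P{G is not a complete graph} ≥ n(n−1)·Δ^{2d}·(1 − 2Δ^d)^{n−2}. -/
open MeasureTheory Real

noncomputable section

/-!
Put one point in the corner `[0, Δ)^d`, a second one in the opposite corner `(1 - Δ, 1]^d`, and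
all the others outside both corners. Every coordinate of the two cornered points differs by more
than `1 - 2Δ`, so their distance exceeds `√d (1 - 2Δ)` and the graph misses that edge. Over the
`n (n - 1)` ordered choices of the two points these events are disjoint, and each has probability
`Δ^d · Δ^d · (1 - 2Δ^d)^(n - 2)`.
-/

lemma Fin.prod_ite_eq_ite_eq {M : Type*} [CommMonoid M] {n : ℕ} {i j : Fin n} (hij : i ≠ j)
    (p q r : M) :
    (∏ k : Fin n, if k = i then p else if k = j then q else r) = p * q * r ^ (n - 2) := by
  classical
  rw [← Finset.mul_prod_erase _ _ (Finset.mem_univ i), if_pos rfl,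
    ← Finset.mul_prod_erase _ _ (Finset.mem_erase.2 ⟨hij.symm, Finset.mem_univ j⟩),
    if_neg hij.symm, if_pos rfl, Finset.prod_congr rfl (g := fun _ => r), Finset.prod_const]
  · simp [Finset.card_erase_of_mem, hij.symm, Nat.sub_sub, mul_assoc]
  · intro k hk
    simp only [Finset.mem_erase] at hk
    simp [hk.1, hk.2.1]

section PairEvent

variable {α : Type*} {n : ℕ} {A B : Set α} {i j : Fin n} {x : Fin n → α}

def pairEvent (A B : Set α) (i j : Fin n) : Set (Fin n → α) :=
  Set.univ.pi fun k => if k = i then A else if k = j then B else (A ∪ B)ᶜ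

lemma mem_left_iff_of_mem_pairEvent (hAB : Disjoint A B) (hx : x ∈ pairEvent A B i j)
    (k : Fin n) : x k ∈ A ↔ k = i := by
  have hk := Set.mem_univ_pi.1 hx k
  refine ⟨fun hA => ?_, fun hki => by simpa [hki] using hk⟩
  by_contra hki
  split_ifs at hk with hkj
  · exact hAB.notMem_of_mem_left hA hk
  · exact hk (Or.inl hA)

lemma mem_right_iff_of_mem_pairEvent (hAB : Disjoint A B) (hij : i ≠ j)
    (hx : x ∈ pairEvent A B i j) (k : Fin n) : x k ∈ B ↔ k = j := by
  have hk := Set.mem_univ_pi.1 hx k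
  refine ⟨fun hB => ?_, fun hkj => by simpa [hkj, hij.symm] using hk⟩
  by_contra hkj
  split_ifs at hk with hki
  · exact hAB.notMem_of_mem_left hk hB
  · exact hk (Or.inr hB)

lemma pairwiseDisjoint_pairEvent (hAB : Disjoint A B) :
    ((Finset.univ.offDiag : Finset (Fin n × Fin n)) : Set (Fin n × Fin n)).PairwiseDisjoint
      fun p => pairEvent A B p.1 p.2 := by
  rintro ⟨i, j⟩ hp ⟨i', j'⟩ hq hpq
  simp only [Finset.coe_offDiag, Set.mem_offDiag] at hp hq
  refine Set.disjoint_left.2 fun x hx hx' => hpq ?_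
  have hi := (mem_left_iff_of_mem_pairEvent hAB hx' i).1
    ((mem_left_iff_of_mem_pairEvent hAB hx i).2 rfl)
  have hj := (mem_right_iff_of_mem_pairEvent hAB hq.2.2 hx' j).1
    ((mem_right_iff_of_mem_pairEvent hAB hp.2.2 hx j).2 rfl)
  rw [hi, hj]

variable [MeasurableSpace α]

lemma measurableSet_pairEvent (hA : MeasurableSet A) (hB : MeasurableSet B) :
    MeasurableSet (pairEvent A B i j) :=
  MeasurableSet.univ_pi fun k => by
    split_ifs
    exacts [hA, hB, (hA.union hB).compl]

variable (μ : Measure α) [IsFiniteMeasure μ]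

lemma measureReal_pi_pairEvent (hij : i ≠ j) :
    (Measure.pi fun _ => μ).real (pairEvent A B i j) =
      μ.real A * μ.real B * μ.real (A ∪ B)ᶜ ^ (n - 2) := by
  rw [measureReal_def, pairEvent, Measure.pi_pi, ENNReal.toReal_prod,
    ← Fin.prod_ite_eq_ite_eq hij]
  exact Finset.prod_congr rfl fun k _ => by split_ifs <;> rfl

lemma measureReal_pi_biUnion_pairEvent (hAB : Disjoint A B) (hA : MeasurableSet A)
    (hB : MeasurableSet B) :
    (Measure.pi fun _ => μ).real (⋃ p ∈ (Finset.univ.offDiag : Finset (Fin n × Fin n)),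
        pairEvent A B p.1 p.2) =
      n * (n - 1) * (μ.real A * μ.real B * μ.real (A ∪ B)ᶜ ^ (n - 2)) := by
  rw [measureReal_biUnion_finset (pairwiseDisjoint_pairEvent hAB)
      fun _ _ => measurableSet_pairEvent hA hB,
    Finset.sum_congr rfl fun p hp => measureReal_pi_pairEvent μ (Finset.mem_offDiag.1 hp).2.2,
    Finset.sum_const, Finset.offDiag_card, Finset.card_univ, Fintype.card_fin, nsmul_eq_mul,
    Nat.cast_sub (Nat.le_mul_self n)]
  push_cast
  ring

end PairEvent

instance isProbabilityMeasure_cubeMeasure (d : ℕ) : IsProbabilityMeasure (cubeMeasure d) :=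
  have : IsProbabilityMeasure (volume.restrict (Set.Icc (0 : ℝ) 1)) := ⟨by simp⟩
  Measure.pi.instIsProbabilityMeasure _

section Corners

variable {d : ℕ} {Δ : ℝ}

def lowerCorner (d : ℕ) (Δ : ℝ) : Set (Fin d → ℝ) :=
  Set.univ.pi fun _ => Set.Ico 0 Δ

def upperCorner (d : ℕ) (Δ : ℝ) : Set (Fin d → ℝ) :=
  Set.univ.pi fun _ => Set.Ioc (1 - Δ) 1

lemma measurableSet_lowerCorner : MeasurableSet (lowerCorner d Δ) :=
  MeasurableSet.univ_pi fun _ => measurableSet_Ico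

lemma measurableSet_upperCorner : MeasurableSet (upperCorner d Δ) :=
  MeasurableSet.univ_pi fun _ => measurableSet_Ioc

lemma cubeMeasure_real_lowerCorner (h0 : 0 ≤ Δ) (h1 : Δ ≤ 1) :
    (cubeMeasure d).real (lowerCorner d Δ) = Δ ^ d := by
  have hsub : Set.Ico 0 Δ ⊆ Set.Icc (0 : ℝ) 1 := fun y hy => ⟨hy.1, hy.2.le.trans h1⟩
  simp [measureReal_def, lowerCorner, cubeMeasure, Measure.pi_pi,
    Measure.restrict_apply measurableSet_Ico, Set.inter_eq_left.2 hsub, h0]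

lemma cubeMeasure_real_upperCorner (h0 : 0 ≤ Δ) (h1 : Δ ≤ 1) :
    (cubeMeasure d).real (upperCorner d Δ) = Δ ^ d := by
  have hsub : Set.Ioc (1 - Δ) 1 ⊆ Set.Icc (0 : ℝ) 1 :=
    fun y hy => ⟨by linarith [hy.1], hy.2⟩
  simp [measureReal_def, upperCorner, cubeMeasure, Measure.pi_pi,
    Measure.restrict_apply measurableSet_Ioc, Set.inter_eq_left.2 hsub, h0]

lemma disjoint_lowerCorner_upperCorner (hd : d ≠ 0) (hΔ : Δ < 1 / 2) :
    Disjoint (lowerCorner d Δ) (upperCorner d Δ) := by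
  refine Set.disjoint_left.2 fun x hx hx' => ?_
  have k : Fin d := ⟨0, Nat.pos_of_ne_zero hd⟩
  linarith [(hx k (Set.mem_univ k)).2, (hx' k (Set.mem_univ k)).1]

lemma cubeMeasure_real_compl_corners (hd : d ≠ 0) (h0 : 0 ≤ Δ) (hΔ : Δ < 1 / 2) :
    (cubeMeasure d).real (lowerCorner d Δ ∪ upperCorner d Δ)ᶜ = 1 - 2 * Δ ^ d := by
  rw [measureReal_compl (measurableSet_lowerCorner.union measurableSet_upperCorner),
    measureReal_union (disjoint_lowerCorner_upperCorner hd hΔ) measurableSet_upperCorner,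
    cubeMeasure_real_lowerCorner h0 (by linarith), cubeMeasure_real_upperCorner h0 (by linarith),
    probReal_univ]
  ring

lemma sqrt_mul_lt_eDist {x y : Fin d → ℝ} {t : ℝ} (hd : d ≠ 0) (ht : 0 ≤ t)
    (hxy : ∀ k, t < |x k - y k|) : Real.sqrt d * t < eDist x y := by
  have : Nonempty (Fin d) := ⟨⟨0, Nat.pos_of_ne_zero hd⟩⟩
  have hsum : ∑ _k : Fin d, t ^ 2 < ∑ k, (x k - y k) ^ 2 :=
    Finset.sum_lt_sum_of_nonempty Finset.univ_nonempty fun k _ => by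
      rw [← sq_abs (x k - y k)]
      exact pow_lt_pow_left₀ (hxy k) ht two_ne_zero
  rw [Finset.sum_const, Finset.card_univ, Fintype.card_fin, nsmul_eq_mul] at hsum
  calc Real.sqrt d * t = Real.sqrt (d * t ^ 2) := by
        rw [Real.sqrt_mul (Nat.cast_nonneg d), Real.sqrt_sq ht]
    _ < eDist x y := Real.sqrt_lt_sqrt (by positivity) hsum

lemma sqrt_mul_lt_eDist_of_mem_corners {x y : Fin d → ℝ} (hd : d ≠ 0) (hΔ : Δ < 1 / 2)
    (hx : x ∈ lowerCorner d Δ) (hy : y ∈ upperCorner d Δ) :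
    Real.sqrt d * (1 - 2 * Δ) < eDist x y :=
  sqrt_mul_lt_eDist hd (by linarith) fun k =>
    lt_abs.2 (Or.inr (by linarith [(hx k (Set.mem_univ k)).2, (hy k (Set.mem_univ k)).1]))

end Corners

lemma biUnion_pairEvent_corners_subset {d n : ℕ} {Δ : ℝ} (hd : d ≠ 0) (hΔ : Δ < 1 / 2) :
    (⋃ p ∈ (Finset.univ.offDiag : Finset (Fin n × Fin n)),
        pairEvent (lowerCorner d Δ) (upperCorner d Δ) p.1 p.2) ⊆
      {x | ¬ completeProp n (geomGraph x (Real.sqrt d * (1 - 2 * Δ)))} := by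
  simp only [Set.subset_def, Set.mem_iUnion, Finset.mem_offDiag]
  rintro x ⟨⟨i, j⟩, ⟨-, -, hij⟩, hx⟩ hcomplete
  have hdisj := disjoint_lowerCorner_upperCorner hd hΔ
  have hxi := (mem_left_iff_of_mem_pairEvent hdisj hx i).2 rfl
  have hxj := (mem_right_iff_of_mem_pairEvent hdisj hij hx j).2 rfl
  exact (hcomplete i j hij).2.not_gt (sqrt_mul_lt_eDist_of_mem_corners hd hΔ hxi hxj)

theorem stmt17_general (d n : ℕ) (hd : 1 ≤ d) (Δ : ℝ) (h0 : 0 < Δ) (h1 : Δ < 1 / 2) :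
    ENNReal.ofReal ((n : ℝ) * ((n : ℝ) - 1) * Δ ^ (2 * d) * (1 - 2 * Δ ^ d) ^ (n - 2)) ≤
      sampleMeasure d n
        {x | ¬ completeProp n (geomGraph x (Real.sqrt d * (1 - 2 * Δ)))} := by
  have hd₀ : d ≠ 0 := by omega
  have hunion := measureReal_pi_biUnion_pairEvent (n := n) (cubeMeasure d)
    (disjoint_lowerCorner_upperCorner hd₀ h1) measurableSet_lowerCorner measurableSet_upperCorner
  rw [cubeMeasure_real_lowerCorner h0.le (by linarith),
    cubeMeasure_real_upperCorner h0.le (by linarith),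
    cubeMeasure_real_compl_corners hd₀ h0.le h1] at hunion
  calc ENNReal.ofReal ((n : ℝ) * ((n : ℝ) - 1) * Δ ^ (2 * d) * (1 - 2 * Δ ^ d) ^ (n - 2))
      = sampleMeasure d n (⋃ p ∈ (Finset.univ.offDiag : Finset (Fin n × Fin n)),
          pairEvent (lowerCorner d Δ) (upperCorner d Δ) p.1 p.2) := by
        rw [sampleMeasure, ← ofReal_measureReal (measure_ne_top _ _), hunion]
        ring_nf
    _ ≤ _ := measure_mono (biUnion_pairEvent_corners_subset hd₀ h1)

/-- for radius `u = √d(1 - 2Δ)`, the random geometric graph fails to be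
complete with probability at least `n(n-1)·Δ^(2d)·(1 - 2Δ^d)^(n-2)`. -/
theorem stmt17 (d n : ℕ) (hd : 1 ≤ d) (hn : 2 ≤ n) (Δ : ℝ) (h0 : 0 < Δ) (h1 : Δ < 1 / 2) :
    ENNReal.ofReal ((n : ℝ) * ((n : ℝ) - 1) * Δ ^ (2 * d) * (1 - 2 * Δ ^ d) ^ (n - 2)) ≤
      sampleMeasure d n
        {x | ¬ completeProp n (geomGraph x (Real.sqrt d * (1 - 2 * Δ)))} :=
  stmt17_general d n hd Δ h0 h1

end
end
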